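/- arXiv:2603.04231 — 2 statements merged into one kernel-verified Lean document; each statement's English description precedes it below -/
import Mathlib

section
/- Let $U_1, U_2 \subseteq \mathbb{R}^p$ be linear subspaces and let $\theta \in (0,2)$. Given any initial point $v^0 \in \mathbb{R}^p$, define the Douglas–Rachford iteration by $x_1^{k+1} = P_{U_1}(v^k)$, $x_2^{k+1} = P_{U_2}(2 x_1^{k+1} - v^k)$, $v^{k+1} = v^k + \theta (x_2^{k+1} - x_1^{k+1})$. Then there exists $v^* \in \mathbb{R}^p$ such that $v^k \to v^*$, and setting $x^* = P_{U_1}(v^*)$ one has $x_1^k \to x^*$, $x_2^k \to x^*$, $x^* = P_{U_2}(2 x^* - v^*)$, and $x^* \in U_1 \cap U_2$. -/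
/-!
With `Rᵢ = 2 P_{Uᵢ} - I`, one Douglas–Rachford step is `v ↦ v + (θ / 2) (R₂ R₁ v - v)`, an averaged
map of the linear isometry `Q = R₂ R₁`. It fixes the fixed space `K` of `Q` pointwise and preserves
`Kᗮ`, since `Q x - x ⊥ K`. On `Kᗮ` it is a strict contraction: with `α = θ / 2 ∈ (0, 1)` it
lowers the squared norm by `α (1 - α) ‖Q w - w‖²`, and in finite dimension `‖Q w - w‖ ≥ δ ‖w‖`
on `Kᗮ`. Hence `vᵏ` converges linearly to the projection `v*` of `v⁰` onto `K`, and
`R₂ R₁ v* = v*` gives `2 P_{U₂} (R₁ v*) = R₂ R₁ v* + R₁ v* = 2 P_{U₁} v*`, the fixed-point equation.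
-/

open Filter Topology

noncomputable def proj {p : ℕ} (U : Submodule ℝ (EuclideanSpace ℝ (Fin p)))
    (v : EuclideanSpace ℝ (Fin p)) : EuclideanSpace ℝ (Fin p) :=
  (U.orthogonalProjection v : EuclideanSpace ℝ (Fin p))

open Module.End

section AveragedIsometry

variable {E : Type*} [NormedAddCommGroup E] [InnerProductSpace ℝ E]

theorem norm_add_smul_sub_sq_of_norm_eq {x y : E} (h : ‖y‖ = ‖x‖) (α : ℝ) :
    ‖x + α • (y - x)‖ ^ 2 = ‖x‖ ^ 2 - α * (1 - α) * ‖y - x‖ ^ 2 := by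
  rw [norm_add_sq_real, norm_smul, mul_pow, Real.norm_eq_abs, sq_abs, real_inner_smul_right,
    norm_sub_sq_real, h, inner_sub_right, real_inner_self_eq_norm_sq, real_inner_comm]
  ring

theorem LinearMap.exists_mul_norm_le_norm_apply_of_mem_orthogonal_ker [FiniteDimensional ℝ E]
    {F : Type*} [NormedAddCommGroup F] [NormedSpace ℝ F] (f : E →ₗ[ℝ] F) :
    ∃ δ > 0, ∀ w ∈ (LinearMap.ker f)ᗮ, δ * ‖w‖ ≤ ‖f w‖ := by
  set g := f ∘ₗ (LinearMap.ker f)ᗮ.subtype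
  have hg : LinearMap.ker g = ⊥ := by
    exact LinearMap.ker_eq_bot'.2 fun w hw => Subtype.ext (inner_self_eq_zero.1 (w.2 _ hw))
  obtain ⟨C, hC, hCg⟩ := g.exists_antilipschitzWith hg
  refine ⟨(C : ℝ)⁻¹, by positivity, fun w hw => ?_⟩
  rw [inv_mul_le_iff₀ (by positivity)]
  exact ZeroHomClass.bound_of_antilipschitz g hCg ⟨w, hw⟩

namespace LinearIsometry

theorem sub_self_mem_orthogonal_eigenspace_one (Q : E →ₗᵢ[ℝ] E) (x : E) :
    Q x - x ∈ (eigenspace (Q : E →ₗ[ℝ] E) 1)ᗮ := by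
  intro u hu
  have hQu : Q u = u := by simpa using mem_eigenspace_iff.1 hu
  rw [inner_sub_right, ← hQu, Q.inner_map_map, hQu, sub_self]

theorem apply_starProjection_eigenspace_one [FiniteDimensional ℝ E] (Q : E →ₗᵢ[ℝ] E) (x : E) :
    Q ((eigenspace (Q : E →ₗ[ℝ] E) 1).starProjection x) =
      (eigenspace (Q : E →ₗ[ℝ] E) 1).starProjection x := by
  simpa using mem_eigenspace_iff.1 ((eigenspace (Q : E →ₗ[ℝ] E) 1).starProjection_apply_mem x)

theorem exists_lt_one_norm_averaged_le [FiniteDimensional ℝ E] (Q : E →ₗᵢ[ℝ] E) {α : ℝ}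
    (hα0 : 0 < α) (hα1 : α < 1) :
    ∃ c, 0 ≤ c ∧ c < 1 ∧ ∀ w ∈ (eigenspace (Q : E →ₗ[ℝ] E) 1)ᗮ,
      ‖w + α • (Q w - w)‖ ≤ c * ‖w‖ := by
  have hK : eigenspace (Q : E →ₗ[ℝ] E) 1 = LinearMap.ker ((Q : E →ₗ[ℝ] E) - LinearMap.id) := by
    ext x; simp [sub_eq_zero]
  obtain ⟨δ, hδ, hδQ⟩ :=
    ((Q : E →ₗ[ℝ] E) - LinearMap.id).exists_mul_norm_le_norm_apply_of_mem_orthogonal_ker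
  rw [hK]
  set q := 1 - α * (1 - α) * δ ^ 2
  have hq : q < 1 := sub_lt_self 1 (mul_pos (mul_pos hα0 (sub_pos.2 hα1)) (pow_pos hδ 2))
  refine ⟨√q, Real.sqrt_nonneg q, (Real.sqrt_lt' one_pos).2 (by simpa using hq), fun w hw => ?_⟩
  have hsq : ‖w + α • (Q w - w)‖ ^ 2 ≤ q * ‖w‖ ^ 2 := by
    have hlow : (δ * ‖w‖) ^ 2 ≤ ‖Q w - w‖ ^ 2 :=
      pow_le_pow_left₀ (by positivity) (by simpa using hδQ w hw) 2
    rw [norm_add_smul_sub_sq_of_norm_eq (Q.norm_map w)]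
    nlinarith [mul_pos hα0 (sub_pos.2 hα1)]
  calc ‖w + α • (Q w - w)‖ = √(‖w + α • (Q w - w)‖ ^ 2) := (Real.sqrt_sq (norm_nonneg _)).symm
    _ ≤ √(q * ‖w‖ ^ 2) := Real.sqrt_le_sqrt hsq
    _ = √q * ‖w‖ := by rw [Real.sqrt_mul' q (by positivity), Real.sqrt_sq (norm_nonneg w)]

theorem tendsto_starProjection_of_averaged_step [FiniteDimensional ℝ E] (Q : E →ₗᵢ[ℝ] E) {α : ℝ}
    (hα0 : 0 < α) (hα1 : α < 1) {v : ℕ → E}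
    (hv : ∀ n, v (n + 1) = v n + α • (Q (v n) - v n)) :
    Tendsto v atTop (𝓝 ((eigenspace (Q : E →ₗ[ℝ] E) 1).starProjection (v 0))) := by
  set K := eigenspace (Q : E →ₗ[ℝ] E) 1
  set x := K.starProjection (v 0)
  have hQx : Q x = x := Q.apply_starProjection_eigenspace_one (v 0)
  obtain ⟨c, hc0, hc1, hcontract⟩ := Q.exists_lt_one_norm_averaged_le hα0 hα1
  have hdecay : ∀ n, v n - x ∈ Kᗮ ∧ ‖v n - x‖ ≤ c ^ n * ‖v 0 - x‖ := by
    intro n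
    induction n with
    | zero => exact ⟨K.sub_starProjection_mem_orthogonal (v 0), by simp⟩
    | succ n ih =>
      have hstep : v (n + 1) - x = (v n - x) + α • (Q (v n - x) - (v n - x)) := by
        rw [hv, map_sub, hQx]; module
      refine ⟨hstep ▸ Kᗮ.add_mem ih.1 (Kᗮ.smul_mem α (Q.sub_self_mem_orthogonal_eigenspace_one _)),
        ?_⟩
      calc ‖v (n + 1) - x‖ ≤ c * ‖v n - x‖ := hstep ▸ hcontract _ ih.1
        _ ≤ c * (c ^ n * ‖v 0 - x‖) := mul_le_mul_of_nonneg_left ih.2 hc0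
        _ = c ^ (n + 1) * ‖v 0 - x‖ := by ring
  rw [tendsto_iff_norm_sub_tendsto_zero]
  refine squeeze_zero (fun n => norm_nonneg _) (fun n => (hdecay n).2) ?_
  simpa using (tendsto_pow_atTop_nhds_zero_of_lt_one hc0 hc1).mul_const ‖v 0 - x‖

end LinearIsometry

end AveragedIsometry

section DouglasRachford

variable {p : ℕ}

theorem proj_eq_starProjection (U : Submodule ℝ (EuclideanSpace ℝ (Fin p)))
    (v : EuclideanSpace ℝ (Fin p)) : proj U v = U.starProjection v :=
  rfl

theorem proj_mem (U : Submodule ℝ (EuclideanSpace ℝ (Fin p))) (v : EuclideanSpace ℝ (Fin p)) :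
    proj U v ∈ U :=
  Submodule.coe_mem _

theorem continuous_proj (U : Submodule ℝ (EuclideanSpace ℝ (Fin p))) : Continuous (proj U) :=
  U.starProjection.continuous

theorem reflection_eq_two_smul_proj_sub (U : Submodule ℝ (EuclideanSpace ℝ (Fin p)))
    (v : EuclideanSpace ℝ (Fin p)) : U.reflection v = (2 : ℝ) • proj U v - v := by
  rw [U.reflection_apply, proj_eq_starProjection]
  module

theorem douglasRachford_step_eq (U₁ U₂ : Submodule ℝ (EuclideanSpace ℝ (Fin p))) (θ : ℝ)
    (v : EuclideanSpace ℝ (Fin p)) :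
    v + θ • (proj U₂ ((2 : ℝ) • proj U₁ v - v) - proj U₁ v) =
      v + (θ / 2) • (U₂.reflection (U₁.reflection v) - v) := by
  rw [reflection_eq_two_smul_proj_sub U₂, ← reflection_eq_two_smul_proj_sub U₁,
    reflection_eq_two_smul_proj_sub U₁]
  module

theorem proj_reflection_of_reflection_reflection_eq
    {U₁ U₂ : Submodule ℝ (EuclideanSpace ℝ (Fin p))} {v : EuclideanSpace ℝ (Fin p)}
    (hv : U₂.reflection (U₁.reflection v) = v) :
    proj U₂ ((2 : ℝ) • proj U₁ v - v) = proj U₁ v := by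
  rw [← reflection_eq_two_smul_proj_sub U₁]
  have h : (2 : ℝ) • proj U₂ (U₁.reflection v) = (2 : ℝ) • proj U₁ v := by
    calc (2 : ℝ) • proj U₂ (U₁.reflection v)
        = U₂.reflection (U₁.reflection v) + U₁.reflection v := by
          rw [reflection_eq_two_smul_proj_sub U₂]; abel
      _ = (2 : ℝ) • proj U₁ v := by rw [hv, reflection_eq_two_smul_proj_sub U₁]; abel
  exact smul_right_injective _ two_ne_zero h

end DouglasRachford

theorem stmt0 {p : ℕ} (U₁ U₂ : Submodule ℝ (EuclideanSpace ℝ (Fin p)))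
    (θ : ℝ) (hθ : θ ∈ Set.Ioo (0 : ℝ) 2)
    (v x₁ x₂ : ℕ → EuclideanSpace ℝ (Fin p))
    (hx₁ : ∀ k, x₁ (k + 1) = proj U₁ (v k))
    (hx₂ : ∀ k, x₂ (k + 1) = proj U₂ ((2 : ℝ) • x₁ (k + 1) - v k))
    (hv : ∀ k, v (k + 1) = v k + θ • (x₂ (k + 1) - x₁ (k + 1))) :
    ∃ vstar : EuclideanSpace ℝ (Fin p),
      Tendsto v atTop (𝓝 vstar) ∧
      Tendsto x₁ atTop (𝓝 (proj U₁ vstar)) ∧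
      Tendsto x₂ atTop (𝓝 (proj U₁ vstar)) ∧
      proj U₁ vstar = proj U₂ ((2 : ℝ) • proj U₁ vstar - vstar) ∧
      proj U₁ vstar ∈ U₁ ⊓ U₂ := by
  obtain ⟨hθ0, hθ2⟩ := hθ
  set Q := (U₁.reflection.trans U₂.reflection).toLinearIsometry
  have hstep : ∀ k, v (k + 1) = v k + (θ / 2) • (Q (v k) - v k) := fun k => by
    rw [hv, hx₂, hx₁]; exact douglasRachford_step_eq U₁ U₂ θ (v k)
  have hlim := Q.tendsto_starProjection_of_averaged_step (by positivity) (by linarith) hstep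
  set vstar := (eigenspace (Q : Module.End ℝ (EuclideanSpace ℝ (Fin p))) 1).starProjection (v 0)
  have hfix : proj U₂ ((2 : ℝ) • proj U₁ vstar - vstar) = proj U₁ vstar :=
    proj_reflection_of_reflection_reflection_eq (Q.apply_starProjection_eigenspace_one (v 0))
  have hx₁lim : Tendsto x₁ atTop (𝓝 (proj U₁ vstar)) := by
    rw [← tendsto_add_atTop_iff_nat 1]
    simpa only [hx₁, Function.comp_def] using ((continuous_proj U₁).tendsto vstar).comp hlim
  have hx₂lim : Tendsto x₂ atTop (𝓝 (proj U₁ vstar)) := by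
    rw [← tendsto_add_atTop_iff_nat 1, ← hfix]
    have hcont : Continuous fun w => proj U₂ ((2 : ℝ) • proj U₁ w - w) :=
      (continuous_proj U₂).comp (((continuous_proj U₁).const_smul (2 : ℝ)).sub continuous_id)
    simpa only [hx₂, hx₁, Function.comp_def] using (hcont.tendsto vstar).comp hlim
  exact ⟨vstar, hlim, hx₁lim, hx₂lim, hfix.symm, proj_mem U₁ vstar, hfix ▸ proj_mem U₂ _⟩
end

section
/- Let $U_1, U_2 \subseteq \mathbb{R}^p$ be linear subspaces and $\theta \in (0,2)$. The fixed point set of the relaxed Douglas–Rachford operator $T_\theta(v) := v + \theta\,(P_{U_2}(2 P_{U_1}(v) - v) - P_{U_1}(v))$ equals $(U_1 \cap U_2) + (U_1^\perp \cap U_2^\perp)$; in particular it is independent of $\theta$. -/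
/-- The relaxed Douglas–Rachford operator. -/
noncomputable def drOp {p : ℕ} (U₁ U₂ : Submodule ℝ (EuclideanSpace ℝ (Fin p)))
    (θ : ℝ) (v : EuclideanSpace ℝ (Fin p)) : EuclideanSpace ℝ (Fin p) :=
  v + θ • (proj U₂ ((2 : ℝ) • proj U₁ v - v) - proj U₁ v)

/-!
Writing `a := P_{U₁} v` and `b := v - a ∈ U₁ᗮ`, the reflected point is `2 P_{U₁} v - v = a - b`.
For `θ ≠ 0`, `v` is fixed iff `P_{U₂} (a - b) = a`, i.e. iff `a ∈ U₂` and `b ∈ U₂ᗮ`; and these are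
exactly the conditions for `v = a + b` to lie in `(U₁ ⊓ U₂) ⊔ (U₁ᗮ ⊓ U₂ᗮ)`.
-/

namespace Submodule

variable {𝕜 E : Type*} [RCLike 𝕜] [NormedAddCommGroup E] [InnerProductSpace 𝕜 E]

theorem starProjection_eq_iff (K : Submodule 𝕜 E) [K.HasOrthogonalProjection] {u v : E} :
    K.starProjection u = v ↔ v ∈ K ∧ u - v ∈ Kᗮ := by
  constructor
  · rintro rfl
    exact ⟨K.starProjection_apply_mem u, K.sub_starProjection_mem_orthogonal u⟩
  · rintro ⟨hv, huv⟩
    exact K.eq_starProjection_of_mem_orthogonal hv huv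

variable (U₁ U₂ : Submodule 𝕜 E) [U₁.HasOrthogonalProjection]

theorem mem_inf_sup_inf_orthogonal_iff (v : E) :
    v ∈ (U₁ ⊓ U₂) ⊔ (U₁ᗮ ⊓ U₂ᗮ) ↔
      U₁.starProjection v ∈ U₂ ∧ v - U₁.starProjection v ∈ U₂ᗮ := by
  constructor
  · intro hv
    obtain ⟨a, ⟨ha₁, ha₂⟩, b, ⟨hb₁, hb₂⟩, rfl⟩ := mem_sup.mp hv
    rw [U₁.eq_starProjection_of_mem_orthogonal' ha₁ hb₁ rfl, add_sub_cancel_left]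
    exact ⟨ha₂, hb₂⟩
  · rintro ⟨ha₂, hb₂⟩
    rw [← add_sub_cancel (U₁.starProjection v) v]
    exact add_mem_sup ⟨U₁.starProjection_apply_mem v, ha₂⟩
      ⟨U₁.sub_starProjection_mem_orthogonal v, hb₂⟩

variable [U₂.HasOrthogonalProjection]

theorem starProjection_reflection_eq_starProjection_iff (v : E) :
    U₂.starProjection ((2 : 𝕜) • U₁.starProjection v - v) = U₁.starProjection v ↔
      U₁.starProjection v ∈ U₂ ∧ v - U₁.starProjection v ∈ U₂ᗮ := by
  have hreflect : (2 : 𝕜) • U₁.starProjection v - v - U₁.starProjection v =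
      -(v - U₁.starProjection v) := by
    module
  rw [starProjection_eq_iff, hreflect, neg_mem_iff]

end Submodule

theorem drOp_eq_self_iff {p : ℕ} (U₁ U₂ : Submodule ℝ (EuclideanSpace ℝ (Fin p))) {θ : ℝ}
    (hθ : θ ≠ 0) (v : EuclideanSpace ℝ (Fin p)) :
    drOp U₁ U₂ θ v = v ↔ proj U₂ ((2 : ℝ) • proj U₁ v - v) = proj U₁ v := by
  rw [drOp, add_eq_left, smul_eq_zero, or_iff_right hθ, sub_eq_zero]

theorem stmt5 {p : ℕ} (U₁ U₂ : Submodule ℝ (EuclideanSpace ℝ (Fin p)))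
    (θ : ℝ) (hθ : θ ∈ Set.Ioo (0 : ℝ) 2) :
    {v : EuclideanSpace ℝ (Fin p) | drOp U₁ U₂ θ v = v} =
      (((U₁ ⊓ U₂) ⊔ (U₁ᗮ ⊓ U₂ᗮ) : Submodule ℝ (EuclideanSpace ℝ (Fin p))) :
        Set (EuclideanSpace ℝ (Fin p))) := by
  ext v
  rw [Set.mem_ofPred_eq, SetLike.mem_coe, drOp_eq_self_iff U₁ U₂ hθ.1.ne',
    Submodule.mem_inf_sup_inf_orthogonal_iff]
  exact U₁.starProjection_reflection_eq_starProjection_iff U₂ v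
end
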